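/- arXiv:1811.06209 — 5 statements merged into one kernel-verified Lean document; each statement's English description precedes it below -/
import Mathlib

section
/- Let m ≥ 2, n_1, …, n_m ≥ 1 be integers, n = n_1 + ⋯ + n_m, and let a_{j,l}^{(k)} be any integers. For every p with 1 ≤ p ≤ m−1 the following identity holds in ℤ^n: u_p^0 + u_p^1 + ⋯ + u_p^{n_p} = ∑_{q=1}^{m−p} ( (−μ(b_{p,q})) · u_{p+q}^0 + ∑_{k=1}^{n_{p+q}} (b_{p,q}^{(k)} − μ(b_{p,q})) · u_{p+q}^k ). (This is the primitive relation for the primitive collection P_p = {u_p^0, …, u_p^{n_p}} of the fan of the generalized Bott manifold.) -/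
/-- The lattice `ℤ^n` with `n = n_0 + ⋯ + n_{m-1}`, presented as functions on pairs
`(j, k)` with `j` a stage (0-indexed) and `k < n j`. -/
abbrev GBModule (m : ℕ) (n : ℕ → ℕ) : Type :=
  (j : Fin m) → Fin (n j.1) → ℤ

/-- The standard basis vector `e_j^k` of `ℤ^n`. -/
def gbE (m : ℕ) (n : ℕ → ℕ) (j : Fin m) (k : Fin (n j.1)) : GBModule m n :=
  Pi.single j (Pi.single k (1 : ℤ))

/-- `μ(x) = min {0, x_0, …, x_{N-1}}` for a vector `x ∈ ℤ^N` (components 0-indexed). -/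
def gbmu (N : ℕ) (x : ℕ → ℤ) : ℤ :=
  Finset.fold min 0 x (Finset.range N)

/-!
Write `T_l = ∑_{j > l} ∑_k a_{j,l}^{(k)} e_j^k`, so that `u_l^0 = -∑_k e_l^k + T_l`. The left-hand
side is then `T_p`, and for any scalar `c` one has
`(-c) u_l^0 + ∑_k (β_k - c) u_l^k = ∑_k β_k e_l^k - c T_l`. The identity therefore holds with any
weights `c_q` in place of `μ(b_{p,q})`, provided `b_{p,q}` is built from the same weights: in the
coordinate `e_{p+Q}^k` the right-hand side is `b_{p,Q}^{(k)} - ∑_{q < Q} c_q a_{p+Q,p+q}^{(k)}`,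
which is `a_{p+Q,p}^{(k)}` by the recursion.
-/

open Finset

def gbTail (m : ℕ) (n : ℕ → ℕ) (a : ℕ → ℕ → ℕ → ℤ) (l : Fin m) : GBModule m n :=
  ∑ j ∈ univ.filter (fun j : Fin m => l < j), ∑ k : Fin (n j.1), a j.1 l.1 k.1 • gbE m n j k

section Coordinates

variable {m : ℕ} {n : ℕ → ℕ}

lemma gbE_apply (l j : Fin m) (k : Fin (n l.1)) (k' : Fin (n j.1)) :
    gbE m n l k j k' = if j.1 = l.1 ∧ k'.1 = k.1 then 1 else 0 := by
  unfold gbE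
  rcases eq_or_ne j l with rfl | h
  · simp [Pi.single_apply, Fin.ext_iff]
  · simp [h, Fin.val_ne_of_ne h]

lemma sum_smul_gbE_apply (s : ℕ) (hs : s < m) (j : Fin m) (k' : Fin (n j.1)) (f : ℕ → ℤ) :
    (∑ k : Fin (n s), f k.1 • gbE m n ⟨s, hs⟩ k) j k' = if j.1 = s then f k'.1 else 0 := by
  simp only [Finset.sum_apply, Pi.smul_apply, gbE_apply, smul_eq_mul, mul_ite, mul_one, mul_zero]
  by_cases h : j.1 = s
  · simp only [h, true_and]
    rw [Fin.sum_univ_eq_sum_range (fun k => if k'.1 = k then f k else 0), sum_ite_eq]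
    simp [← h]
  · simp [h]

lemma gbTail_apply (a : ℕ → ℕ → ℕ → ℤ) (l j : Fin m) (k' : Fin (n j.1)) :
    gbTail m n a l j k' = if l.1 < j.1 then a j.1 l.1 k'.1 else 0 := by
  have hcol : ∀ i : Fin m, (∑ k : Fin (n i.1), a i.1 l.1 k.1 • gbE m n i k) j k' =
      if i = j then a j.1 l.1 k'.1 else 0 := by
    intro i
    refine (sum_smul_gbE_apply i.1 i.2 j k' _).trans ?_
    rcases eq_or_ne i j with rfl | h
    · simp
    · simp [h, Fin.val_ne_of_ne h.symm]
  rw [gbTail, Finset.sum_apply, Finset.sum_apply]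
  simp only [hcol, sum_ite_eq', mem_filter, mem_univ, true_and, Fin.lt_def]

end Coordinates

section Relation

variable {m : ℕ} {n : ℕ → ℕ} {a : ℕ → ℕ → ℕ → ℤ}
  {u : (l : Fin m) → Fin (n l.1 + 1) → GBModule m n}
  (hu0 : ∀ l : Fin m, u l 0 = -(∑ k : Fin (n l.1), gbE m n l k) + gbTail m n a l)
  (huk : ∀ (l : Fin m) (k : Fin (n l.1)), u l k.succ = gbE m n l k)
include hu0 huk

lemma sum_u_eq_gbTail (l : Fin m) : ∑ k : Fin (n l.1 + 1), u l k = gbTail m n a l := by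
  simp only [Fin.sum_univ_succ, hu0, huk, neg_add_cancel_comm]

lemma neg_smul_u_zero_add_sum (l : Fin m) (c : ℤ) (β : ℕ → ℤ) :
    (-c) • u l 0 + ∑ k : Fin (n l.1), (β k.1 - c) • u l k.succ =
      ∑ k : Fin (n l.1), β k.1 • gbE m n l k - c • gbTail m n a l := by
  simp only [hu0, huk, sub_smul, sum_sub_distrib, ← smul_sum]
  module

end Relation

lemma ite_lt_eq_sum_Icc {p j M : ℕ} (hj : j ≤ p + M) (α β c : ℕ → ℤ)
    (hβ : p < j → β (j - p) = α 0 + ∑ r ∈ Icc 1 (j - p - 1), c r * α r) :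
    (if p < j then α 0 else 0) =
      ∑ q ∈ Icc 1 M, ((if j = p + q then β q else 0) - c q * if p + q < j then α q else 0) := by
  by_cases hpj : p < j
  · obtain ⟨Q, rfl⟩ : ∃ Q, j = p + Q := ⟨j - p, by omega⟩
    rw [Nat.add_sub_cancel_left] at hβ
    have hQ : Q ∈ Icc 1 M := mem_Icc.mpr ⟨by omega, by omega⟩
    have hlt : ∑ q ∈ Icc 1 M, c q * (if p + q < p + Q then α q else 0) =
        ∑ r ∈ Icc 1 (Q - 1), c r * α r := by
      simp only [mul_ite, mul_zero, add_lt_add_iff_left]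
      rw [← sum_filter]
      congr 1
      ext q
      simp only [mem_filter, mem_Icc] at hQ ⊢
      omega
    simp only [add_right_inj, sum_sub_distrib, sum_ite_eq, hQ, if_true, hlt, if_pos hpj]
    rw [hβ hpj]
    ring
  · rw [if_neg hpj, eq_comm]
    refine sum_eq_zero fun q hq => ?_
    have hq1 := (mem_Icc.mp hq).1
    simp [show j ≠ p + q by omega, show ¬p + q < j by omega]

lemma gbTail_eq_sum {m : ℕ} {n : ℕ → ℕ} {a : ℕ → ℕ → ℕ → ℤ} {p : ℕ} (hp : p < m)
    (b : ℕ → ℕ → ℤ) (c : ℕ → ℤ)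
    (hb : ∀ q k, 1 ≤ q → p + q < m → k < n (p + q) →
      b q k = a (p + q) p k + ∑ r ∈ Icc 1 (q - 1), c r * a (p + q) (p + r) k) :
    gbTail m n a ⟨p, hp⟩ =
      ∑ q ∈ (Icc 1 (m - 1 - p)).attach,
        (∑ k : Fin (n (p + q.1)),
            b q.1 k.1 • gbE m n ⟨p + q.1, by have := (mem_Icc.mp q.2).2; omega⟩ k -
          c q.1 • gbTail m n a ⟨p + q.1, by have := (mem_Icc.mp q.2).2; omega⟩) := by
  funext j k
  rw [Finset.sum_apply, Finset.sum_apply]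
  simp only [Pi.sub_apply, Pi.smul_apply, sum_smul_gbE_apply, gbTail_apply,
    smul_eq_mul]
  rw [sum_attach (Icc 1 (m - 1 - p)) fun q =>
    (if j.1 = p + q then b q k.1 else 0) - c q * if p + q < j.1 then a j.1 (p + q) k.1 else 0]
  refine ite_lt_eq_sum_Icc (by omega) (fun r => a j.1 (p + r) k.1) (fun q => b q k.1) c
    fun hpj => ?_
  have hj : p + (j.1 - p) = j.1 := by omega
  have := hb (j.1 - p) k.1 (by omega) (by omega) (by simp [hj])
  simpa [hj] using this

/-- For the data of a generalized Bott manifold (stages indexed by `0, …, m-1`),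
with `b_{p,q}` defined recursively by `b_{p,1} = a_{p+1,p}` and
`b_{p,q} = a_{p+q,p} + ∑_{r=1}^{q-1} μ(b_{p,r}) a_{p+q,p+r}`, the primitive relation
`u_p^0 + ⋯ + u_p^{n_p} = ∑_{q} ((−μ(b_{p,q})) u_{p+q}^0 + ∑_k (b_{p,q}^{(k)} − μ(b_{p,q})) u_{p+q}^k)`
holds in `ℤ^n` for every `p` with `p + 1 < m`. -/
theorem stmt_2 (m : ℕ) (n : ℕ → ℕ)
    (a : ℕ → ℕ → ℕ → ℤ)
    (u : (l : Fin m) → Fin (n l.1 + 1) → GBModule m n)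
    (hu0 : ∀ l : Fin m,
      u l 0 = -(∑ k : Fin (n l.1), gbE m n l k) +
        ∑ j ∈ Finset.univ.filter (fun j : Fin m => l < j),
          ∑ k : Fin (n j.1), a j.1 l.1 k.1 • gbE m n j k)
    (huk : ∀ (l : Fin m) (k : Fin (n l.1)), u l k.succ = gbE m n l k)
    (b : ℕ → ℕ → ℕ → ℤ)
    (hb1 : ∀ p k, p + 1 < m → k < n (p + 1) → b p 1 k = a (p + 1) p k)
    (hbq : ∀ p q k, 2 ≤ q → p + q < m → k < n (p + q) →
      b p q k = a (p + q) p k +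
        ∑ r ∈ Finset.Icc 1 (q - 1), gbmu (n (p + r)) (b p r) * a (p + q) (p + r) k) :
    ∀ (p : ℕ) (hp : p + 1 < m),
      ∑ k : Fin (n p + 1), u ⟨p, by omega⟩ k =
      ∑ q ∈ (Finset.Icc 1 (m - 1 - p)).attach,
        ((-(gbmu (n (p + q.1)) (b p q.1))) •
            u ⟨p + q.1, by have := Finset.mem_Icc.mp q.2; omega⟩ 0 +
          ∑ k : Fin (n (p + q.1)),
            (b p q.1 k.1 - gbmu (n (p + q.1)) (b p q.1)) •
              u ⟨p + q.1, by have := Finset.mem_Icc.mp q.2; omega⟩ k.succ) := by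
  intro p hp
  have hb : ∀ q k, 1 ≤ q → p + q < m → k < n (p + q) →
      b p q k = a (p + q) p k +
        ∑ r ∈ Icc 1 (q - 1), gbmu (n (p + r)) (b p r) * a (p + q) (p + r) k := by
    intro q k hq
    rcases hq.eq_or_lt with rfl | hq
    · simpa using hb1 p k
    · exact hbq p q k hq
  refine (sum_u_eq_gbTail hu0 huk ⟨p, by omega⟩).trans ?_
  rw [gbTail_eq_sum (by omega) (b p) _ hb]
  exact sum_congr rfl fun q _ => (neg_smul_u_zero_add_sum hu0 huk ⟨p + q, _⟩ _ (b p q)).symm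
end

section
/- Let m ≥ 2 be an integer and let a_{j,l} (2 ≤ j ≤ m, 1 ≤ l ≤ j−1) be integers determining an m-stage Bott manifold. Then the Fano criterion ∑_{q=1}^{m−p} |b_{p,q}| ≤ 1 holds for every p = 1, …, m−1 if and only if for every p = 1, …, m−1 one of the following three conditions holds: (1) a_{p+1,p} = a_{p+2,p} = ⋯ = a_{m,p} = 0; (2) there exists q with 1 ≤ q ≤ m−p such that a_{p+q,p} = 1 and a_{p+r,p} = 0 for all r ≠ q with 1 ≤ r ≤ m−p; (3) there exists q with 1 ≤ q ≤ m−p such that a_{p+r,p} = 0 for 1 ≤ r ≤ q−1, a_{p+q,p} = −1, and a_{p+r,p} = a_{p+r,p+q} for q+1 ≤ r ≤ m−p. -/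
/-!
For fixed `p`, write `c q = b p q`, `x r = a (p + r) p` and `y q r = a (p + q) (p + r)`. The
recursion determines `c` uniquely from `x` and `y`, so `c` equals a given sequence `e` on
`[1, m - p]` exactly when `e` itself satisfies the recursion. Since the `c q` are integers,
`∑ |c q| ≤ 1` says that `c` vanishes, or is `1` at a single place, or `-1` at a single place.
Plugging these three sequences into the recursion gives conditions (1), (2) and (3): a
nonnegative sequence solves it iff it equals `x`, and the single `-1` at `q` contributes
`-y r q` to every later term.
-/

open Finset

theorem Int.sum_abs_le_one_iff {ι : Type*} [DecidableEq ι] {s : Finset ι} {f : ι → ℤ} :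
    ∑ i ∈ s, |f i| ≤ 1 ↔
      Set.EqOn f 0 s ∨ (∃ i ∈ s, Set.EqOn f (Pi.single i 1) s) ∨
        ∃ i ∈ s, Set.EqOn f (Pi.single i (-1)) s := by
  constructor
  · intro h
    by_cases hzero : Set.EqOn f 0 s
    · exact .inl hzero
    obtain ⟨i, hi, hfi⟩ : ∃ i ∈ s, f i ≠ 0 := by simpa [Set.EqOn] using hzero
    have hsplit := add_sum_erase s (fun j => |f j|) hi
    have hrest_nonneg := sum_nonneg fun j (_ : j ∈ s.erase i) => abs_nonneg (f j)
    have hfi_pos := abs_pos.mpr hfi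
    have hrest : ∀ j ∈ s.erase i, f j = 0 := by
      have hsum : ∑ j ∈ s.erase i, |f j| = 0 := by omega
      simpa using (sum_eq_zero_iff_of_nonneg fun j _ => abs_nonneg (f j)).mp hsum
    have heqOn : ∀ v, f i = v → Set.EqOn f (Pi.single i v) s := by
      intro v hv j hj
      rcases eq_or_ne j i with rfl | hji
      · simpa using hv
      · simpa [hji] using hrest j (mem_erase.mpr ⟨hji, hj⟩)
    rcases (abs_eq zero_le_one).mp (by omega : |f i| = 1) with h1 | h1
    · exact .inr (.inl ⟨i, hi, heqOn 1 h1⟩)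
    · exact .inr (.inr ⟨i, hi, heqOn (-1) h1⟩)
  · rintro (h | ⟨i, hi, h⟩ | ⟨i, hi, h⟩) <;> rw [sum_congr rfl fun j hj => congrArg abs (h hj)]
    · simp
    · simp [Pi.single_apply, apply_ite, hi]
    · simp [Pi.single_apply, apply_ite, hi]

theorem sum_Icc_min_zero_single_neg_one_mul {q₀ : ℕ} (hq₀ : 1 ≤ q₀) (q : ℕ) (z : ℕ → ℤ) :
    ∑ r ∈ Icc 1 (q - 1), min 0 ((Pi.single q₀ (-1) : ℕ → ℤ) r) * z r =
      if q₀ < q then -z q₀ else 0 := by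
  have hterm : ∀ r, min 0 ((Pi.single q₀ (-1) : ℕ → ℤ) r) * z r =
      if q₀ = r then -z q₀ else 0 := by
    intro r
    rcases eq_or_ne r q₀ with rfl | hr
    · simp
    · simp [hr, hr.symm]
  simp only [hterm, sum_ite_eq, mem_Icc]
  exact if_congr (by omega) rfl rfl

/-- For `q = 1` the sum is empty, so this also covers `b p 1 = a (p + 1) p`. -/
def SolvesBottRecursion (n : ℕ) (x : ℕ → ℤ) (y : ℕ → ℕ → ℤ) (c : ℕ → ℤ) : Prop :=
  ∀ q ∈ Set.Icc 1 n, c q = x q + ∑ r ∈ Icc 1 (q - 1), min 0 (c r) * y q r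

namespace SolvesBottRecursion

variable {n : ℕ} {x : ℕ → ℤ} {y : ℕ → ℕ → ℤ} {c e : ℕ → ℤ}

theorem eqOn (hc : SolvesBottRecursion n x y c) (he : SolvesBottRecursion n x y e) :
    Set.EqOn c e (Set.Icc 1 n) := by
  intro q hq
  induction q using Nat.strong_induction_on with
  | _ q ih =>
    obtain ⟨hq1, hqn⟩ := hq
    rw [hc q ⟨hq1, hqn⟩, he q ⟨hq1, hqn⟩]
    congr 1
    refine sum_congr rfl fun r hr => ?_
    obtain ⟨hr1, hrq⟩ := mem_Icc.mp hr
    rw [ih r (by omega) ⟨hr1, by omega⟩]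

theorem iff_eqOn (hc : SolvesBottRecursion n x y c) :
    SolvesBottRecursion n x y e ↔ Set.EqOn c e (Set.Icc 1 n) := by
  refine ⟨hc.eqOn, fun h q hq => ?_⟩
  obtain ⟨hq1, hqn⟩ := hq
  rw [← h ⟨hq1, hqn⟩, hc q ⟨hq1, hqn⟩]
  congr 1
  refine sum_congr rfl fun r hr => ?_
  obtain ⟨hr1, hrq⟩ := mem_Icc.mp hr
  rw [h ⟨hr1, by omega⟩]

theorem iff_eqOn_of_nonneg (he : 0 ≤ e) :
    SolvesBottRecursion n x y e ↔ Set.EqOn e x (Set.Icc 1 n) := by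
  have hsum : ∀ q, ∑ r ∈ Icc 1 (q - 1), min 0 (e r) * y q r = 0 := fun q =>
    sum_eq_zero fun r _ => by rw [min_eq_left (show (0 : ℤ) ≤ e r from he r), zero_mul]
  simp only [SolvesBottRecursion, hsum, add_zero]
  rfl

theorem single_neg_one_iff {q₀ : ℕ} (hq₀ : 1 ≤ q₀) (hq₀n : q₀ ≤ n) :
    SolvesBottRecursion n x y (Pi.single q₀ (-1)) ↔
      (∀ r, 1 ≤ r → r ≤ q₀ - 1 → x r = 0) ∧ x q₀ = -1 ∧
        ∀ r, q₀ + 1 ≤ r → r ≤ n → x r = y r q₀ := by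
  simp only [SolvesBottRecursion, sum_Icc_min_zero_single_neg_one_mul hq₀, Set.mem_Icc, and_imp]
  constructor
  · intro h
    refine ⟨fun r hr1 hr => ?_, ?_, fun r hr hrn => ?_⟩
    · simpa [(show r ≠ q₀ by omega), (show ¬ q₀ < r by omega)] using (h r hr1 (by omega)).symm
    · simpa using (h q₀ hq₀ hq₀n).symm
    · have := h r (by omega) hrn
      simp [(show r ≠ q₀ by omega), (show q₀ < r by omega)] at this
      linarith
  · rintro ⟨hbefore, hq₀x, hafter⟩ q hq1 hqn
    rcases lt_trichotomy q q₀ with hlt | rfl | hgt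
    · simp [hlt.ne, lt_asymm hlt, hbefore q hq1 (by omega)]
    · simp [hq₀x]
    · simp [hgt, hgt.ne', hafter q hgt hqn]

theorem sum_abs_le_one_iff (hc : SolvesBottRecursion n x y c) :
    ∑ q ∈ Icc 1 n, |c q| ≤ 1 ↔
      (∀ r, 1 ≤ r → r ≤ n → x r = 0) ∨
      (∃ q, 1 ≤ q ∧ q ≤ n ∧ x q = 1 ∧ ∀ r, 1 ≤ r → r ≤ n → r ≠ q → x r = 0) ∨
      (∃ q, 1 ≤ q ∧ q ≤ n ∧ (∀ r, 1 ≤ r → r ≤ q - 1 → x r = 0) ∧ x q = -1 ∧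
        ∀ r, q + 1 ≤ r → r ≤ n → x r = y r q) := by
  rw [Int.sum_abs_le_one_iff, coe_Icc]
  refine or_congr ?_ (or_congr (exists_congr fun q => ?_) (exists_congr fun q => ?_))
  · rw [← hc.iff_eqOn, iff_eqOn_of_nonneg le_rfl]
    simp only [Set.EqOn, Set.mem_Icc, Pi.zero_apply, and_imp, eq_comm]
  · rw [mem_Icc, and_assoc]
    refine and_congr_right fun hq1 => and_congr_right fun hqn => ?_
    rw [← hc.iff_eqOn, iff_eqOn_of_nonneg (Pi.single_nonneg.mpr zero_le_one)]
    constructor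
    · intro h
      refine ⟨by simpa using (h ⟨hq1, hqn⟩).symm, fun r hr1 hrn hrq => ?_⟩
      simpa [hrq] using (h ⟨hr1, hrn⟩).symm
    · rintro ⟨hxq, hrest⟩ r ⟨hr1, hrn⟩
      rcases eq_or_ne r q with rfl | hrq
      · simp [hxq]
      · simp [hrq, hrest r hr1 hrn hrq]
  · rw [mem_Icc, and_assoc]
    refine and_congr_right fun hq1 => and_congr_right fun hqn => ?_
    rw [← hc.iff_eqOn, single_neg_one_iff hq1 hqn]

end SolvesBottRecursion

theorem stmt_5_general (m : ℕ) (a : ℕ → ℕ → ℤ) (b : ℕ → ℕ → ℤ)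
    (hb1 : ∀ p, 1 ≤ p → p ≤ m - 1 → b p 1 = a (p + 1) p)
    (hbq : ∀ p q, 1 ≤ p → 2 ≤ q → p + q ≤ m →
      b p q = a (p + q) p + ∑ r ∈ Finset.Icc 1 (q - 1), min 0 (b p r) * a (p + q) (p + r)) :
    (∀ p, 1 ≤ p → p ≤ m - 1 → ∑ q ∈ Finset.Icc 1 (m - p), |b p q| ≤ 1) ↔
    (∀ p, 1 ≤ p → p ≤ m - 1 →
      (∀ r, 1 ≤ r → r ≤ m - p → a (p + r) p = 0) ∨
      (∃ q, 1 ≤ q ∧ q ≤ m - p ∧ a (p + q) p = 1 ∧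
        ∀ r, 1 ≤ r → r ≤ m - p → r ≠ q → a (p + r) p = 0) ∨
      (∃ q, 1 ≤ q ∧ q ≤ m - p ∧
        (∀ r, 1 ≤ r → r ≤ q - 1 → a (p + r) p = 0) ∧
        a (p + q) p = -1 ∧
        (∀ r, q + 1 ≤ r → r ≤ m - p → a (p + r) p = a (p + r) (p + q)))) := by
  refine forall_congr' fun p => imp_congr_right fun hp1 => imp_congr_right fun hpm => ?_
  have hc : SolvesBottRecursion (m - p) (fun r => a (p + r) p)
      (fun q r => a (p + q) (p + r)) (b p) := by
    rintro q ⟨hq1, hqn⟩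
    rcases (show q = 1 ∨ 2 ≤ q by omega) with rfl | hq2
    · simp [hb1 p hp1 hpm]
    · exact hbq p q hp1 hq2 (by omega)
  exact hc.sum_abs_le_one_iff

/-- For an `m`-stage Bott manifold determined by integers `a j l` (`2 ≤ j ≤ m`,
`1 ≤ l ≤ j−1`), with `b p q` defined recursively by `b p 1 = a (p+1) p` and
`b p q = a (p+q) p + ∑_{r=1}^{q−1} min(0, b p r) · a (p+q) (p+r)`:
the Fano criterion `∑_{q=1}^{m−p} |b p q| ≤ 1` holds for every `p = 1, …, m−1`
if and only if for every `p = 1, …, m−1` one of the three conditions (1), (2), (3)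
of the theorem holds. -/
theorem stmt_5 (m : ℕ) (hm : 2 ≤ m) (a : ℕ → ℕ → ℤ) (b : ℕ → ℕ → ℤ)
    (hb1 : ∀ p, 1 ≤ p → p ≤ m - 1 → b p 1 = a (p + 1) p)
    (hbq : ∀ p q, 1 ≤ p → 2 ≤ q → p + q ≤ m →
      b p q = a (p + q) p + ∑ r ∈ Finset.Icc 1 (q - 1), min 0 (b p r) * a (p + q) (p + r)) :
    (∀ p, 1 ≤ p → p ≤ m - 1 → ∑ q ∈ Finset.Icc 1 (m - p), |b p q| ≤ 1) ↔
    (∀ p, 1 ≤ p → p ≤ m - 1 →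
      (∀ r, 1 ≤ r → r ≤ m - p → a (p + r) p = 0) ∨
      (∃ q, 1 ≤ q ∧ q ≤ m - p ∧ a (p + q) p = 1 ∧
        ∀ r, 1 ≤ r → r ≤ m - p → r ≠ q → a (p + r) p = 0) ∨
      (∃ q, 1 ≤ q ∧ q ≤ m - p ∧
        (∀ r, 1 ≤ r → r ≤ q - 1 → a (p + r) p = 0) ∧
        a (p + q) p = -1 ∧
        (∀ r, q + 1 ≤ r → r ≤ m - p → a (p + r) p = a (p + r) (p + q)))) :=
  stmt_5_general m a b hb1 hbq
end

section
/- Let m ≥ 2 be an integer, let a_{j,l} (2 ≤ j ≤ m, 1 ≤ l ≤ j−1) be integers, and fix p with 1 ≤ p ≤ m−1. If ∑_{q=1}^{m−p} |b_{p,q}| ≤ 1, then one of the following holds: (1) a_{p+r,p} = 0 for all 1 ≤ r ≤ m−p; (2) there exists q with 1 ≤ q ≤ m−p such that a_{p+q,p} = 1 and a_{p+r,p} = 0 for all r ≠ q; (3) there exists q with 1 ≤ q ≤ m−p such that a_{p+r,p} = 0 for 1 ≤ r ≤ q−1, a_{p+q,p} = −1, and a_{p+r,p} = a_{p+r,p+q}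 for q+1 ≤ r ≤ m−p. -/
/-- For integers `a j l` (`2 ≤ j ≤ m`, `1 ≤ l ≤ j−1`) and `b p q` defined recursively by
`b p 1 = a (p+1) p` and `b p q = a (p+q) p + ∑_{r=1}^{q−1} min(0, b p r) · a (p+q) (p+r)`:
if `p` is fixed with `1 ≤ p ≤ m−1` and `∑_{q=1}^{m−p} |b p q| ≤ 1`, then one of the
conditions (1), (2), (3) holds. -/
theorem stmt_6 (m : ℕ) (hm : 2 ≤ m) (a : ℕ → ℕ → ℤ) (b : ℕ → ℕ → ℤ)
    (hb1 : ∀ p, 1 ≤ p → p ≤ m - 1 → b p 1 = a (p + 1) p)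
    (hbq : ∀ p q, 1 ≤ p → 2 ≤ q → p + q ≤ m →
      b p q = a (p + q) p + ∑ r ∈ Finset.Icc 1 (q - 1), min 0 (b p r) * a (p + q) (p + r))
    (p : ℕ) (hp1 : 1 ≤ p) (hp2 : p ≤ m - 1)
    (hsum : ∑ q ∈ Finset.Icc 1 (m - p), |b p q| ≤ 1) :
    (∀ r, 1 ≤ r → r ≤ m - p → a (p + r) p = 0) ∨
    (∃ q, 1 ≤ q ∧ q ≤ m - p ∧ a (p + q) p = 1 ∧
      ∀ r, 1 ≤ r → r ≤ m - p → r ≠ q → a (p + r) p = 0) ∨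
    (∃ q, 1 ≤ q ∧ q ≤ m - p ∧
      (∀ r, 1 ≤ r → r ≤ q - 1 → a (p + r) p = 0) ∧
      a (p + q) p = -1 ∧
      (∀ r, q + 1 ≤ r → r ≤ m - p → a (p + r) p = a (p + r) (p + q))) := by
  set n := m - p with hn
  -- general recursion valid for all 1 ≤ q ≤ n
  have key : ∀ q, 1 ≤ q → q ≤ n →
      b p q = a (p + q) p + ∑ r ∈ Finset.Icc 1 (q - 1), min 0 (b p r) * a (p + q) (p + r) := by
    intro q hq1 hqn
    rcases eq_or_lt_of_le hq1 with h | h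
    · subst h
      simp [hb1 p hp1 hp2]
    · exact hbq p q hp1 (by omega) (by omega)
  by_cases hz : ∀ q ∈ Finset.Icc 1 n, b p q = 0
  · -- all b vanish: case (1)
    left
    intro r hr1 hr2
    have hk := key r hr1 hr2
    have hs : ∑ s ∈ Finset.Icc 1 (r - 1), min 0 (b p s) * a (p + r) (p + s) = 0 := by
      apply Finset.sum_eq_zero
      intro s hs
      simp only [Finset.mem_Icc] at hs
      rw [hz s (Finset.mem_Icc.mpr ⟨hs.1, by omega⟩)]
      simp
    rw [hz r (Finset.mem_Icc.mpr ⟨hr1, hr2⟩), hs, add_zero] at hk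
    exact hk.symm
  · push_neg at hz
    obtain ⟨q0, hq0mem, hq0ne⟩ := hz
    simp only [Finset.mem_Icc] at hq0mem
    -- all other b's are zero
    have hother : ∀ q, 1 ≤ q → q ≤ n → q ≠ q0 → b p q = 0 := by
      intro q hq1 hqn hqne
      have habs0 : 1 ≤ |b p q0| := by
        rcases abs_pos.mpr hq0ne with h
        omega
      have hpair : |b p q| + |b p q0| ≤ ∑ s ∈ Finset.Icc 1 n, |b p s| := by
        have : ∑ s ∈ ({q, q0} : Finset ℕ), |b p s| ≤ ∑ s ∈ Finset.Icc 1 n, |b p s| := by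
          apply Finset.sum_le_sum_of_subset_of_nonneg
          · intro x hx
            simp only [Finset.mem_insert, Finset.mem_singleton] at hx
            rcases hx with rfl | rfl <;> exact Finset.mem_Icc.mpr ⟨by omega, by omega⟩
          · intro i _ _; exact abs_nonneg _
        rwa [Finset.sum_pair hqne] at this
      have hnn : 0 ≤ |b p q| := abs_nonneg _
      have : |b p q| = 0 := by omega
      exact abs_eq_zero.mp this
    -- b p q0 = 1 or -1
    have hbq0 : b p q0 = 1 ∨ b p q0 = -1 := by
      have h1 : |b p q0| ≤ ∑ s ∈ Finset.Icc 1 n, |b p s| :=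
        Finset.single_le_sum (f := fun s => |b p s|) (fun i _ => abs_nonneg _)
          (Finset.mem_Icc.mpr ⟨hq0mem.1, hq0mem.2⟩)
      have h2 : |b p q0| ≤ 1 := le_trans h1 hsum
      rw [abs_le] at h2
      omega
    -- a (p+q) p = b p q for all q ≤ q0 (sum terms all have min 0 (b p r), r < q0, b = 0)
    have heq_early : ∀ q, 1 ≤ q → q ≤ q0 → a (p + q) p = b p q := by
      intro q hq1 hqq0
      have hk := key q hq1 (by omega)
      have hs : ∑ s ∈ Finset.Icc 1 (q - 1), min 0 (b p s) * a (p + q) (p + s) = 0 := by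
        apply Finset.sum_eq_zero
        intro s hsm
        simp only [Finset.mem_Icc] at hsm
        rw [hother s hsm.1 (by omega) (by omega)]
        simp
      rw [hs, add_zero] at hk
      exact hk.symm
    rcases hbq0 with hpos | hneg
    · -- case (2)
      right; left
      refine ⟨q0, hq0mem.1, hq0mem.2, ?_, ?_⟩
      · rw [heq_early q0 hq0mem.1 le_rfl, hpos]
      · intro r hr1 hr2 hrne
        rcases le_or_gt r q0 with h | h
        · rw [heq_early r hr1 h]; exact hother r hr1 hr2 hrne
        · have hk := key r hr1 hr2
          have hs : ∑ s ∈ Finset.Icc 1 (r - 1), min 0 (b p s) * a (p + r) (p + s) = 0 := by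
            apply Finset.sum_eq_zero
            intro s hsm
            simp only [Finset.mem_Icc] at hsm
            rcases eq_or_ne s q0 with rfl | hsne
            · rw [hpos]; simp
            · rw [hother s hsm.1 (by omega) hsne]; simp
          rw [hother r hr1 hr2 hrne, hs, add_zero] at hk
          exact hk.symm
    · -- case (3)
      right; right
      refine ⟨q0, hq0mem.1, hq0mem.2, ?_, ?_, ?_⟩
      · intro r hr1 hr2
        rw [heq_early r hr1 (by omega)]
        exact hother r hr1 (by omega) (by omega)
      · rw [heq_early q0 hq0mem.1 le_rfl, hneg]
      · intro r hr1 hr2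
        have hk := key r (by omega) hr2
        have hmem : q0 ∈ Finset.Icc 1 (r - 1) := Finset.mem_Icc.mpr ⟨hq0mem.1, by omega⟩
        have hs : ∑ s ∈ Finset.Icc 1 (r - 1), min 0 (b p s) * a (p + r) (p + s)
            = - a (p + r) (p + q0) := by
          rw [Finset.sum_eq_single_of_mem q0 hmem]
          · rw [hneg]; simp
          · intro s hsm hsne
            simp only [Finset.mem_Icc] at hsm
            rw [hother s hsm.1 (by omega) hsne]
            simp
        rw [hother r (by omega) hr2 (by omega), hs] at hk
        linarith
end

section
/- Let m ≥ 2 be an integer, let a_{j,l} (2 ≤ j ≤ m, 1 ≤ l ≤ j−1) be integers, and fix p with 1 ≤ p ≤ m−1. Suppose there exists q with 1 ≤ q ≤ m−p such that a_{p+r,p} = 0 for 1 ≤ r ≤ q−1, a_{p+q,p} = −1, and a_{p+r,p} = a_{p+r,p+q} for q+1 ≤ r ≤ m−p. Then b_{p,q} = −1 and b_{p,r} = 0 for all r ≠ q with 1 ≤ r ≤ m−p; in particular ∑_{r=1}^{m−p} |b_{p,r}| = 1. -/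
/-! Along the recursion only the term `r = q` of the sum can survive: by induction `b p s`
vanishes for `s ≠ q` and equals `-1` at `s = q`. Hence `b p r = a (p+r) p - a (p+r) (p+q)` for
`r > q`, which the hypothesis `a (p+r) p = a (p+r) (p+q)` makes zero, while for `r ≤ q` the sum is
empty of nonzero terms and `b p r = a (p+r) p`. -/

open Finset

theorem eq_neg_indicator_of_rec {c α : ℕ → ℤ} {β : ℕ → ℕ → ℤ} {N q : ℕ} (hq : 1 ≤ q)
    (hrec : ∀ r, 1 ≤ r → r ≤ N → c r = α r + ∑ s ∈ Icc 1 (r - 1), min 0 (c s) * β r s)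
    (hα0 : ∀ r, 1 ≤ r → r < q → α r = 0) (hαq : α q = -1)
    (hαβ : ∀ r, q < r → r ≤ N → α r = β r q) :
    ∀ r, 1 ≤ r → r ≤ N → c r = if r = q then -1 else 0 := by
  intro r
  induction r using Nat.strong_induction_on with
  | _ r ih =>
    intro hr1 hrN
    have hterm : ∀ s ∈ Icc 1 (r - 1),
        min 0 (c s) * β r s = if q = s then -β r q else 0 := by
      intro s hs
      rw [mem_Icc] at hs
      rw [ih s (by omega) hs.1 (by omega)]
      by_cases hsq : s = q
      · subst hsq; simp
      · simp [hsq, Ne.symm hsq]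
    rw [hrec r hr1 hrN, sum_congr rfl hterm, sum_ite_eq]
    rcases lt_trichotomy r q with hlt | rfl | hgt
    · rw [if_neg (by simp only [mem_Icc]; omega), if_neg hlt.ne, hα0 r hr1 hlt, add_zero]
    · rw [if_neg (by simp only [mem_Icc]; omega), if_pos rfl, hαq, add_zero]
    · rw [if_pos (by simp only [mem_Icc]; omega), if_neg hgt.ne', hαβ r hgt hrN, add_neg_cancel]

theorem stmt_9_general (m : ℕ) (a : ℕ → ℕ → ℤ) (b : ℕ → ℕ → ℤ)
    (hb1 : ∀ p, 1 ≤ p → p ≤ m - 1 → b p 1 = a (p + 1) p)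
    (hbq : ∀ p q, 1 ≤ p → 2 ≤ q → p + q ≤ m →
      b p q = a (p + q) p + ∑ r ∈ Finset.Icc 1 (q - 1), min 0 (b p r) * a (p + q) (p + r))
    (p : ℕ) (hp1 : 1 ≤ p)
    (q : ℕ) (hq1 : 1 ≤ q) (hq2 : q ≤ m - p)
    (ha0 : ∀ r, 1 ≤ r → r ≤ q - 1 → a (p + r) p = 0)
    (haq : a (p + q) p = -1)
    (har : ∀ r, q + 1 ≤ r → r ≤ m - p → a (p + r) p = a (p + r) (p + q)) :
    b p q = -1 ∧
    (∀ r, 1 ≤ r → r ≤ m - p → r ≠ q → b p r = 0) ∧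
    ∑ r ∈ Finset.Icc 1 (m - p), |b p r| = 1 := by
  have hrec : ∀ r, 1 ≤ r → r ≤ m - p →
      b p r = a (p + r) p + ∑ s ∈ Icc 1 (r - 1), min 0 (b p s) * a (p + r) (p + s) := by
    intro r hr1 hr2
    obtain rfl | hr := eq_or_lt_of_le hr1
    · simp [hb1 p hp1 (by omega)]
    · exact hbq p r hp1 hr (by omega)
  have hb := eq_neg_indicator_of_rec hq1 hrec (fun r hr1 hrq => ha0 r hr1 (by omega)) haq har
  have hq : q ∈ Icc 1 (m - p) := mem_Icc.mpr ⟨hq1, hq2⟩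
  refine ⟨by simpa using hb q hq1 hq2, fun r hr1 hr2 hrq => by simpa [hrq] using hb r hr1 hr2, ?_⟩
  rw [sum_eq_single_of_mem q hq (fun r hr hrq => ?_), hb q hq1 hq2, if_pos rfl, abs_neg, abs_one]
  rw [mem_Icc] at hr
  rw [hb r hr.1 hr.2, if_neg hrq, abs_zero]

/-- For integers `a j l` (`2 ≤ j ≤ m`, `1 ≤ l ≤ j−1`) and `b p q` defined recursively by
`b p 1 = a (p+1) p` and `b p q = a (p+q) p + ∑_{r=1}^{q−1} min(0, b p r) · a (p+q) (p+r)`: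
if `p` is fixed with `1 ≤ p ≤ m−1` and there is `q` with `1 ≤ q ≤ m−p` such that
`a (p+r) p = 0` for `1 ≤ r ≤ q−1`, `a (p+q) p = −1`, and `a (p+r) p = a (p+r) (p+q)` for
`q+1 ≤ r ≤ m−p`, then `b p q = −1` and `b p r = 0` for all `r ≠ q` with `1 ≤ r ≤ m−p`;
in particular `∑_{r=1}^{m−p} |b p r| = 1`. -/
theorem stmt_9 (m : ℕ) (hm : 2 ≤ m) (a : ℕ → ℕ → ℤ) (b : ℕ → ℕ → ℤ)
    (hb1 : ∀ p, 1 ≤ p → p ≤ m - 1 → b p 1 = a (p + 1) p)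
    (hbq : ∀ p q, 1 ≤ p → 2 ≤ q → p + q ≤ m →
      b p q = a (p + q) p + ∑ r ∈ Finset.Icc 1 (q - 1), min 0 (b p r) * a (p + q) (p + r))
    (p : ℕ) (hp1 : 1 ≤ p) (hp2 : p ≤ m - 1)
    (q : ℕ) (hq1 : 1 ≤ q) (hq2 : q ≤ m - p)
    (ha0 : ∀ r, 1 ≤ r → r ≤ q - 1 → a (p + r) p = 0)
    (haq : a (p + q) p = -1)
    (har : ∀ r, q + 1 ≤ r → r ≤ m - p → a (p + r) p = a (p + r) (p + q)) :
    b p q = -1 ∧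
    (∀ r, 1 ≤ r → r ≤ m - p → r ≠ q → b p r = 0) ∧
    ∑ r ∈ Finset.Icc 1 (m - p), |b p r| = 1 :=
  stmt_9_general m a b hb1 hbq p hp1 q hq1 hq2 ha0 haq har
end

section
/- Let r ≥ 3 be an integer and suppose a_{j,l} = −1 for all 2 ≤ j ≤ r and 1 ≤ l ≤ j−1 (equivalently, the Bott manifold X_r determined by the upper triangular matrix with all entries β_{ij} = 1 for i < j and 1 on the diagonal). Then for every p = 1, …, r−1 one has b_{p,1} = −1 and b_{p,q} = 0 for all 2 ≤ q ≤ r−p; hence ∑_{q=1}^{r−p} |b_{p,q}| = 1 ≤ 1 for every p, so by the main theorem X_r is Fano. (This gives a counterexample to Chary's claimed characterization, since |η_1^+| = |{1 < j ≤ r : β_{1j} > 0}| = r−1 ≥ 2.) -/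
/-!
With every `a` equal to `-1`, the recursion reads `b p q = -1 - ∑_{s<q} min(0, b p s)`.
Since `b p 1 = -1`, strong induction shows that only the term `s = 1` survives in the sum,
which then cancels the leading `-1`; so `b p q = 0` for `q ≥ 2`.
-/

open Finset

theorem sum_Icc_one_eq_of_eq_zero {M : Type*} [AddCommMonoid M] {f : ℕ → M} {n : ℕ}
    (hn : 1 ≤ n) (hf : ∀ q, 2 ≤ q → q ≤ n → f q = 0) :
    ∑ q ∈ Icc 1 n, f q = f 1 :=
  sum_eq_single_of_mem 1 (mem_Icc.2 ⟨le_rfl, hn⟩) fun q hq hq1 =>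
    hf q (by grind) (mem_Icc.1 hq).2

theorem eq_zero_of_eq_neg_one_sub_sum_min {c : ℕ → ℤ} {n : ℕ} (h1 : c 1 = -1)
    (hrec : ∀ q, 2 ≤ q → q ≤ n → c q = -1 - ∑ s ∈ Icc 1 (q - 1), min 0 (c s)) :
    ∀ q, 2 ≤ q → q ≤ n → c q = 0 := by
  intro q
  induction q using Nat.strong_induction_on with
  | _ q ih =>
    intro hq hqn
    have hsum : ∑ s ∈ Icc 1 (q - 1), min 0 (c s) = -1 := by
      rw [sum_Icc_one_eq_of_eq_zero (by omega)
        fun s hs hsq => by rw [ih s (by omega) hs (by omega), min_self], h1]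
      rfl
    rw [hrec q hq hqn, hsum]
    norm_num

theorem stmt_10_general (r : ℕ) (a : ℕ → ℕ → ℤ)
    (ha : ∀ j l, 2 ≤ j → j ≤ r → 1 ≤ l → l ≤ j - 1 → a j l = -1)
    (b : ℕ → ℕ → ℤ)
    (hb1 : ∀ p, 1 ≤ p → p ≤ r - 1 → b p 1 = a (p + 1) p)
    (hbq : ∀ p q, 1 ≤ p → 2 ≤ q → p + q ≤ r →
      b p q = a (p + q) p + ∑ s ∈ Finset.Icc 1 (q - 1), min 0 (b p s) * a (p + q) (p + s)) :
    ∀ p, 1 ≤ p → p ≤ r - 1 →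
      b p 1 = -1 ∧
      (∀ q, 2 ≤ q → q ≤ r - p → b p q = 0) ∧
      ∑ q ∈ Finset.Icc 1 (r - p), |b p q| = 1 := by
  intro p hp hpr
  have hb1' : b p 1 = -1 := by
    rw [hb1 p hp hpr, ha (p + 1) p (by omega) (by omega) hp (by omega)]
  have hrec : ∀ q, 2 ≤ q → q ≤ r - p →
      b p q = -1 - ∑ s ∈ Icc 1 (q - 1), min 0 (b p s) := by
    intro q hq hqr
    rw [hbq p q hp hq (by omega), ha (p + q) p (by omega) (by omega) hp (by omega),
      sub_eq_add_neg, ← sum_neg_distrib]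
    refine congrArg _ (sum_congr rfl fun s hs => ?_)
    rw [ha (p + q) (p + s) (by omega) (by omega) (by omega) (by grind), mul_neg_one]
  have hzero := eq_zero_of_eq_neg_one_sub_sum_min hb1' hrec
  refine ⟨hb1', hzero, ?_⟩
  rw [sum_Icc_one_eq_of_eq_zero (by omega) fun q hq hqr => by rw [hzero q hq hqr, abs_zero],
    hb1', abs_neg, abs_one]

/-- Let `r ≥ 3` and let the Bott manifold `X_r` be determined by `a j l = −1` for all
`2 ≤ j ≤ r`, `1 ≤ l ≤ j−1` (equivalently, by the upper triangular matrix with all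
entries `β_{ij} = 1` for `i < j` and `1` on the diagonal), where `b p q` is defined
recursively by `b p 1 = a (p+1) p` and
`b p q = a (p+q) p + ∑_{s=1}^{q−1} min(0, b p s) · a (p+q) (p+s)`.  Then for every
`p = 1, …, r−1` one has `b p 1 = −1` and `b p q = 0` for all `2 ≤ q ≤ r−p`; hence
`∑_{q=1}^{r−p} |b p q| = 1 ≤ 1` for every `p`, so by the main theorem `X_r` is Fano. -/
theorem stmt_10 (r : ℕ) (hr : 3 ≤ r) (a : ℕ → ℕ → ℤ)
    (ha : ∀ j l, 2 ≤ j → j ≤ r → 1 ≤ l → l ≤ j - 1 → a j l = -1)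
    (b : ℕ → ℕ → ℤ)
    (hb1 : ∀ p, 1 ≤ p → p ≤ r - 1 → b p 1 = a (p + 1) p)
    (hbq : ∀ p q, 1 ≤ p → 2 ≤ q → p + q ≤ r →
      b p q = a (p + q) p + ∑ s ∈ Finset.Icc 1 (q - 1), min 0 (b p s) * a (p + q) (p + s)) :
    ∀ p, 1 ≤ p → p ≤ r - 1 →
      b p 1 = -1 ∧
      (∀ q, 2 ≤ q → q ≤ r - p → b p q = 0) ∧
      ∑ q ∈ Finset.Icc 1 (r - p), |b p q| = 1 :=
  stmt_10_general r a ha b hb1 hbq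
end
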